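/- arXiv:2211.09530 — 4 statements merged into one kernel-verified Lean document; each statement's English description precedes it below -/
import Mathlib

section
/- Let C be a rainbow cycle and X either a rainbow cycle or a bad piece, such that the color sets of X and of C \ X are disjoint and C has at least one edge whose vertex pair is not an edge of X. If C and X share at least two vertices, then the union C ∪ X contains a rainbow even cycle. -/
/-! Colored graphs encoded as finite sets of (vertex pair, color) entries. -/

variable {V K : Type*} [DecidableEq V] [DecidableEq K]

/-- Uncolored edges of a colored graph. -/
def uedges (G : Finset (Sym2 V × K)) : Set (Sym2 V) := {e | ∃ c, (e, c) ∈ G}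

/-- The underlying simple graph of a colored graph. -/
def graphOf (G : Finset (Sym2 V × K)) : SimpleGraph V :=
  SimpleGraph.fromEdgeSet (uedges G)

/-- Vertex set of a colored graph. -/
def vertSet (G : Finset (Sym2 V × K)) : Set V := {v | ∃ p ∈ G, v ∈ p.1}

/-- Color set of a colored graph. -/
def colorSet (G : Finset (Sym2 V × K)) : Set K := {c | ∃ e, (e, c) ∈ G}

/-- A colored graph is simple: no loops, and no two edges on the same vertex pair. -/
def Simple (G : Finset (Sym2 V × K)) : Prop :=
  (∀ p ∈ G, ¬ p.1.IsDiag) ∧ ∀ p ∈ G, ∀ q ∈ G, p.1 = q.1 → p = q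

/-- A colored graph is rainbow: all edges have pairwise distinct colors. -/
def Rainbow (G : Finset (Sym2 V × K)) : Prop :=
  ∀ p ∈ G, ∀ q ∈ G, p.2 = q.2 → p = q

/-- The (uncolored) edges of `G` form a cycle. -/
def IsCycleSet (G : Finset (Sym2 V × K)) : Prop :=
  ∃ (u : V) (W : (graphOf G).Walk u u), W.IsCycle ∧ ∀ e, e ∈ uedges G ↔ e ∈ W.edges

/-- The (uncolored) edges of `G` form a path with terminals `s` and `t`. -/
def IsPathSet (G : Finset (Sym2 V × K)) (s t : V) : Prop :=
  ∃ W : (graphOf G).Walk s t, W.IsPath ∧ ∀ e, e ∈ uedges G ↔ e ∈ W.edges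

/-- A bad piece: an almost rainbow theta graph made of three rainbow paths sharing
their two terminals, with at least 6 vertices. -/
def IsBadPiece (G : Finset (Sym2 V × K)) : Prop :=
  Simple G ∧ (colorSet G).ncard = G.card - 1 ∧ 6 ≤ (vertSet G).ncard ∧
  ∃ s t : V, s ≠ t ∧ ∃ P : Fin 3 → Finset (Sym2 V × K),
    G = P 0 ∪ P 1 ∪ P 2 ∧
    (∀ i, IsPathSet (P i) s t ∧ Rainbow (P i)) ∧
    (∀ i j, i ≠ j → vertSet (P i) ∩ vertSet (P j) = {s, t}) ∧
    (∀ i j, i ≠ j → uedges (P i) ∩ uedges (P j) = ∅)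

/-- `G` contains a rainbow even cycle subgraph. -/
def ContainsRainbowEvenCycle (G : Finset (Sym2 V × K)) : Prop :=
  ∃ R ⊆ G, Simple R ∧ Rainbow R ∧ IsCycleSet R ∧ Even R.card

/-- A long rainbow odd cycle: a rainbow cycle of odd length at least 7. -/
def IsLongRainbowOddCycle (G : Finset (Sym2 V × K)) : Prop :=
  Simple G ∧ Rainbow G ∧ IsCycleSet G ∧ Odd G.card ∧ 7 ≤ G.card

/-- A rainbow tree: a rainbow, acyclic, connected colored graph. -/
def IsRainbowTree (G : Finset (Sym2 V × K)) : Prop :=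
  Simple G ∧ Rainbow G ∧ (graphOf G).IsAcyclic ∧
    ∀ u ∈ vertSet G, ∀ v ∈ vertSet G, (graphOf G).Reachable u v

/-- A Frankenstein partition: each part is a long rainbow odd cycle, a bad piece or a
rainbow tree; distinct parts share at most one vertex and have disjoint colors; the
rainbow trees are pairwise vertex-disjoint; and the union contains no rainbow even
cycle subgraph. -/
def IsFrankensteinPartition {m : ℕ} (parts : Fin m → Finset (Sym2 V × K)) : Prop :=
  (∀ i j, i ≠ j → Set.Subsingleton (vertSet (parts i) ∩ vertSet (parts j))) ∧
  (∀ i j, i ≠ j → Disjoint (colorSet (parts i)) (colorSet (parts j))) ∧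
  (∀ i, IsLongRainbowOddCycle (parts i) ∨ IsBadPiece (parts i) ∨ IsRainbowTree (parts i)) ∧
  (∀ i j, i ≠ j → IsRainbowTree (parts i) → IsRainbowTree (parts j) →
    vertSet (parts i) ∩ vertSet (parts j) = ∅) ∧
  ¬ ContainsRainbowEvenCycle (Finset.univ.biUnion parts)

/-- A Frankenstein graph: a colored graph admitting a Frankenstein partition. -/
def IsFrankenstein (G : Finset (Sym2 V × K)) : Prop :=
  ∃ (m : ℕ) (parts : Fin m → Finset (Sym2 V × K)),
    1 ≤ m ∧ G = Finset.univ.biUnion parts ∧ IsFrankensteinPartition parts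


/-!
A shortest arc of `C` through an edge outside `X` whose ends are two vertices of `X` is an
`X`-path `P` from `u` to `v`; its edges lie in `C \ X`, so its colors are new to `X`. Hence it
suffices to find in `X` two rainbow `u`–`v` paths whose lengths differ in parity, as one of them
closes `P` into a rainbow even cycle. A rainbow cycle `X` is either even or offers its two arcs
between `u` and `v`. In a bad piece, let `A` and `B` be the paths carrying the two edges of the
repeated color and `Z` the third one. The cycles `A ∪ Z` and `B ∪ Z` are rainbow, so we may
assume both odd. If `u` and `v` lie on a common one of them, its arcs will do; otherwise, say, `u`
lies inside `A` and `v` inside `B`, and the two arcs of `A ∪ Z` from `u` to an end of `B`,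
continued along the half of `B` that avoids the repeated color, will do.
-/

open SimpleGraph Finset

section ColoredGraph

variable {A B G : Finset (Sym2 V × K)}

omit [DecidableEq V] [DecidableEq K] in
lemma uedges_mono (h : A ⊆ B) : uedges A ⊆ uedges B := fun _ ⟨c, hc⟩ => ⟨c, h hc⟩

omit [DecidableEq V] [DecidableEq K] in
lemma vertSet_mono (h : A ⊆ B) : vertSet A ⊆ vertSet B := fun _ ⟨p, hp, hv⟩ => ⟨p, h hp, hv⟩

omit [DecidableEq V] [DecidableEq K] in
lemma colorSet_mono (h : A ⊆ B) : colorSet A ⊆ colorSet B := fun _ ⟨e, he⟩ => ⟨e, h he⟩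

lemma uedges_union : uedges (A ∪ B) = uedges A ∪ uedges B := by
  ext e
  simp only [uedges, Set.mem_ofPred_eq, Set.mem_union, mem_union, exists_or]

lemma vertSet_union : vertSet (A ∪ B) = vertSet A ∪ vertSet B := by
  ext x
  simp only [vertSet, Set.mem_ofPred_eq, Set.mem_union, mem_union, or_and_right, exists_or]

omit [DecidableEq V] [DecidableEq K] in
lemma mem_vertSet_iff {x : V} : x ∈ vertSet G ↔ ∃ e ∈ uedges G, x ∈ e :=
  ⟨fun ⟨p, hp, hx⟩ => ⟨p.1, ⟨p.2, hp⟩, hx⟩, fun ⟨e, ⟨c, hc⟩, hx⟩ => ⟨(e, c), hc, hx⟩⟩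

omit [DecidableEq V] [DecidableEq K] in
lemma Simple.mono (hB : Simple B) (h : A ⊆ B) : Simple A :=
  ⟨fun p hp => hB.1 p (h hp), fun p hp q hq => hB.2 p (h hp) q (h hq)⟩

omit [DecidableEq V] [DecidableEq K] in
lemma Rainbow.mono (hB : Rainbow B) (h : A ⊆ B) : Rainbow A :=
  fun p hp q hq => hB p (h hp) q (h hq)

omit [DecidableEq V] [DecidableEq K] in
lemma disjoint_of_disjoint_uedges (h : Disjoint (uedges A) (uedges B)) : Disjoint A B :=
  Finset.disjoint_left.2 fun _ hA hB => h.ne_of_mem ⟨_, hA⟩ ⟨_, hB⟩ rfl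

lemma Simple.union (hA : Simple A) (hB : Simple B) (h : Disjoint (uedges A) (uedges B)) :
    Simple (A ∪ B) := by
  refine ⟨fun p hp => (mem_union.1 hp).elim (hA.1 p) (hB.1 p), fun p hp q hq hpq => ?_⟩
  rcases mem_union.1 hp with hpA | hpB <;> rcases mem_union.1 hq with hqA | hqB
  · exact hA.2 p hpA q hqA hpq
  · exact absurd hpq (h.ne_of_mem ⟨_, hpA⟩ ⟨_, hqB⟩)
  · exact absurd hpq.symm (h.ne_of_mem ⟨_, hqA⟩ ⟨_, hpB⟩)
  · exact hB.2 p hpB q hqB hpq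

lemma Rainbow.union (hA : Rainbow A) (hB : Rainbow B) (h : Disjoint (colorSet A) (colorSet B)) :
    Rainbow (A ∪ B) := by
  intro p hp q hq hpq
  rcases mem_union.1 hp with hpA | hpB <;> rcases mem_union.1 hq with hqA | hqB
  · exact hA p hpA q hqA hpq
  · exact absurd hpq (h.ne_of_mem ⟨_, hpA⟩ ⟨_, hqB⟩)
  · exact absurd hpq.symm (h.ne_of_mem ⟨_, hqA⟩ ⟨_, hpB⟩)
  · exact hB p hpB q hqB hpq

omit [DecidableEq V] [DecidableEq K] in
lemma ContainsRainbowEvenCycle.mono (hA : ContainsRainbowEvenCycle A) (h : A ⊆ B) :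
    ContainsRainbowEvenCycle B :=
  let ⟨R, hR, hrest⟩ := hA
  ⟨R, hR.trans h, hrest⟩

end ColoredGraph

namespace Sym2

variable {e : Sym2 V} {u v : V}

omit [DecidableEq V] in
lemma isDiag_of_forall_mem_eq (h : ∀ x ∈ e, x = u) : e.IsDiag := by
  induction e using Sym2.ind with
  | _ a b => exact mk_isDiag_iff.2 ((h a (mem_mk_left a b)).trans (h b (mem_mk_right a b)).symm)

omit [DecidableEq V] in
lemma eq_mk_of_forall_mem_eq_or_eq (he : ¬ e.IsDiag) (h : ∀ x ∈ e, x = u ∨ x = v) :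
    e = s(u, v) := by
  induction e using Sym2.ind with
  | _ a b =>
    rw [mk_isDiag_iff] at he
    rcases h a (mem_mk_left a b) with rfl | rfl <;> rcases h b (mem_mk_right a b) with rfl | rfl
    · exact absurd rfl he
    · rfl
    · exact eq_swap
    · exact absurd rfl he

end Sym2

namespace SimpleGraph.Walk

variable {H : SimpleGraph V} {u v w : V}

omit [DecidableEq V] in
lemma IsPath.append_of_mem_support {p : H.Walk u w} {q : H.Walk w v} (hp : p.IsPath)
    (hq : q.IsPath) (h : ∀ x ∈ p.support, x ∈ q.support → x = w) : (p.append q).IsPath := by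
  rw [isPath_def, support_append, List.nodup_append]
  refine ⟨hp.support_nodup, hq.support_nodup.sublist (List.tail_sublist _), ?_⟩
  rintro x hxp _ hxq rfl
  have hw : w ∉ q.support.tail := (List.nodup_cons.1 (q.cons_tail_support ▸ hq.support_nodup)).1
  exact hw (h x hxp (List.mem_of_mem_tail hxq) ▸ hxq)

end SimpleGraph.Walk

section Realization

variable {G : Finset (Sym2 V × K)} {H : SimpleGraph V} {s t x : V}

omit [DecidableEq V] [DecidableEq K] in
lemma mem_support_iff_eq_end_or_mem_vertSet {W : H.Walk s t}
    (hW : ∀ e, e ∈ uedges G ↔ e ∈ W.edges) : x ∈ W.support ↔ x = t ∨ x ∈ vertSet G := by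
  simp only [Walk.mem_support_iff_exists_mem_edges, mem_vertSet_iff, hW]

omit [DecidableEq V] [DecidableEq K] in
lemma mem_support_iff_eq_start_or_mem_vertSet {W : H.Walk s t}
    (hW : ∀ e, e ∈ uedges G ↔ e ∈ W.edges) : x ∈ W.support ↔ x = s ∨ x ∈ vertSet G := by
  simpa [Walk.support_reverse] using
    mem_support_iff_eq_end_or_mem_vertSet (W := W.reverse) (by simpa [Walk.edges_reverse] using hW)

omit [DecidableEq V] [DecidableEq K] in
lemma mem_edgeSet_graphOf_of_mem_edges {W : H.Walk s t} (hW : ∀ e, e ∈ uedges G ↔ e ∈ W.edges)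
    {e : Sym2 V} (he : e ∈ W.edges) : e ∈ (graphOf G).edgeSet := by
  rw [graphOf, edgeSet_fromEdgeSet]
  exact ⟨(hW e).2 he, H.not_isDiag_of_mem_edgeSet (W.edges_subset_edgeSet he)⟩

omit [DecidableEq V] [DecidableEq K] in
/-- Walks in the complete graph can realize the path sets of different graphs at once, so they
can be concatenated. -/
lemma isPathSet_iff_top : IsPathSet G s t ↔
    ∃ W : (⊤ : SimpleGraph V).Walk s t, W.IsPath ∧ ∀ e, e ∈ uedges G ↔ e ∈ W.edges :=
  ⟨fun ⟨W, hW, hG⟩ => ⟨W.mapLe le_top, hW.mapLe le_top, by simpa [Walk.edges_mapLe_eq_edges]⟩,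
    fun ⟨W, hW, hG⟩ => ⟨W.transfer _ fun _ => mem_edgeSet_graphOf_of_mem_edges hG,
      hW.transfer _, by simpa [Walk.edges_transfer]⟩⟩

omit [DecidableEq V] [DecidableEq K] in
lemma isCycleSet_iff_top : IsCycleSet G ↔
    ∃ (u : V) (W : (⊤ : SimpleGraph V).Walk u u), W.IsCycle ∧ ∀ e, e ∈ uedges G ↔ e ∈ W.edges :=
  ⟨fun ⟨u, W, hW, hG⟩ => ⟨u, W.mapLe le_top, hW.mapLe le_top,
      by simpa [Walk.edges_mapLe_eq_edges]⟩,
    fun ⟨u, W, hW, hG⟩ => ⟨u, W.transfer _ fun _ => mem_edgeSet_graphOf_of_mem_edges hG,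
      hW.transfer _, by simpa [Walk.edges_transfer]⟩⟩

lemma exists_union_eq_of_mem_uedges_iff_append {L₁ L₂ : List (Sym2 V)}
    (hG : ∀ e, e ∈ uedges G ↔ e ∈ L₁ ++ L₂) (hd : (L₁ ++ L₂).Nodup) :
    ∃ A B : Finset (Sym2 V × K), A ∪ B = G ∧ Disjoint A B ∧
      (∀ e, e ∈ uedges A ↔ e ∈ L₁) ∧ ∀ e, e ∈ uedges B ↔ e ∈ L₂ := by
  have hsub : ∀ {L : List (Sym2 V)}, (∀ e ∈ L, e ∈ L₁ ++ L₂) →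
      ∀ e, e ∈ uedges (G.filter (·.1 ∈ L)) ↔ e ∈ L := fun hL e =>
    ⟨fun ⟨_, hc⟩ => (mem_filter.1 hc).2, fun he =>
      let ⟨c, hc⟩ := (hG e).2 (hL e he); ⟨c, mem_filter.2 ⟨hc, he⟩⟩⟩
  refine ⟨G.filter (·.1 ∈ L₁), G.filter (·.1 ∈ L₂), ?_, ?_,
    hsub fun e he => List.mem_append_left _ he, hsub fun e he => List.mem_append_right _ he⟩
  · rw [← filter_or, filter_true_of_mem fun p hp => List.mem_append.1 ((hG p.1).1 ⟨p.2, hp⟩)]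
  · exact disjoint_filter.2 fun p _ h₁ h₂ => (List.nodup_append.1 hd).2.2 _ h₁ _ h₂ rfl

end Realization

namespace IsPathSet

variable {A B G : Finset (Sym2 V × K)} {s t u v w x : V}

omit [DecidableEq V] [DecidableEq K] in
lemma reverse (h : IsPathSet G s t) : IsPathSet G t s :=
  let ⟨W, hW, hG⟩ := h
  ⟨W.reverse, hW.reverse, fun e => by rw [hG, Walk.edges_reverse, List.mem_reverse]⟩

omit [DecidableEq V] [DecidableEq K] in
lemma not_isDiag (h : IsPathSet G s t) {e : Sym2 V} (he : e ∈ uedges G) : ¬ e.IsDiag :=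
  let ⟨W, _, hG⟩ := h
  (graphOf G).not_isDiag_of_mem_edgeSet (W.edges_subset_edgeSet ((hG e).1 he))

omit [DecidableEq V] [DecidableEq K] in
lemma start_mem_vertSet (h : IsPathSet G s t) (hst : s ≠ t) : s ∈ vertSet G :=
  let ⟨_, _, hG⟩ := h
  ((mem_support_iff_eq_end_or_mem_vertSet hG).1 (Walk.start_mem_support _)).resolve_left hst

omit [DecidableEq V] [DecidableEq K] in
lemma end_mem_vertSet (h : IsPathSet G s t) (hst : s ≠ t) : t ∈ vertSet G :=
  h.reverse.start_mem_vertSet hst.symm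

omit [DecidableEq V] [DecidableEq K] in
lemma nonempty (h : IsPathSet G s t) (hst : s ≠ t) : G.Nonempty :=
  let ⟨p, hp, _⟩ := h.start_mem_vertSet hst
  ⟨p, hp⟩

omit [DecidableEq V] [DecidableEq K] in
lemma disjoint_of_vertSet_inter_subset (hA : IsPathSet A s t)
    (h : vertSet A ∩ vertSet B ⊆ {w}) : Disjoint A B :=
  Finset.disjoint_left.2 fun p hpA hpB => hA.not_isDiag ⟨p.2, hpA⟩
    (Sym2.isDiag_of_forall_mem_eq fun _ hx => h ⟨⟨p, hpA, hx⟩, ⟨p, hpB, hx⟩⟩)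

omit [DecidableEq V] [DecidableEq K] in
lemma forall_mem_uedges_eq (h : IsPathSet G s t) (hst : s(s, t) ∈ uedges G) :
    ∀ e ∈ uedges G, e = s(s, t) := by
  obtain ⟨W, hW, hG⟩ := h
  rw [hW.eq_adj_toWalk_of_mem_edges ((hG _).1 hst)] at hG
  simpa [Adj.edges_toWalk] using fun e => (hG e).1

lemma union (hA : IsPathSet A u w) (hB : IsPathSet B w v) (h : vertSet A ∩ vertSet B ⊆ {w}) :
    IsPathSet (A ∪ B) u v := by
  obtain ⟨a, ha, hA⟩ := isPathSet_iff_top.1 hA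
  obtain ⟨b, hb, hB⟩ := isPathSet_iff_top.1 hB
  refine isPathSet_iff_top.2
    ⟨a.append b, ha.append_of_mem_support hb fun x hxa hxb => ?_, fun e => ?_⟩
  · rcases (mem_support_iff_eq_end_or_mem_vertSet hA).1 hxa with rfl | hxA
    · rfl
    rcases (mem_support_iff_eq_start_or_mem_vertSet hB).1 hxb with rfl | hxB
    · rfl
    exact h ⟨hxA, hxB⟩
  · rw [uedges_union, Set.mem_union, hA, hB, Walk.edges_append, List.mem_append]

lemma exists_split (h : IsPathSet G s t) (hx : x ∈ vertSet G) :
    ∃ A B, A ∪ B = G ∧ Disjoint A B ∧ IsPathSet A s x ∧ IsPathSet B x t ∧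
      vertSet A ∩ vertSet B ⊆ {x} := by
  obtain ⟨W, hW, hG⟩ := isPathSet_iff_top.1 h
  have hxW := (mem_support_iff_eq_end_or_mem_vertSet hG).2 (Or.inr hx)
  have hspec := W.take_spec hxW
  set q := W.takeUntil x hxW
  set r := W.dropUntil x hxW
  have hqr : W.edges = q.edges ++ r.edges := by rw [← Walk.edges_append, hspec]
  obtain ⟨A, B, hAB, hdisj, hA, hB⟩ := exists_union_eq_of_mem_uedges_iff_append (L₁ := q.edges)
    (L₂ := r.edges) (by rwa [← hqr]) (hqr ▸ hW.isTrail.edges_nodup)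
  refine ⟨A, B, hAB, hdisj, isPathSet_iff_top.2 ⟨q, hW.takeUntil hxW, hA⟩,
    isPathSet_iff_top.2 ⟨r, hW.dropUntil hxW, hB⟩, ?_⟩
  rintro y ⟨hyA, hyB⟩
  have hyq := (mem_support_iff_eq_end_or_mem_vertSet hA).2 (Or.inr hyA)
  rcases List.mem_cons.1 (r.cons_tail_support ▸ (mem_support_iff_eq_end_or_mem_vertSet hB).2
    (Or.inr hyB)) with rfl | hyr
  · rfl
  have hnd := hW.support_nodup
  rw [← hspec, Walk.support_append, List.nodup_append] at hnd
  exact absurd rfl (hnd.2.2 y hyq y hyr)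

lemma union_isCycleSet (hA : IsPathSet A u v) (hB : IsPathSet B u v) (huv : u ≠ v)
    (hue : Disjoint (uedges A) (uedges B)) (hvs : vertSet A ∩ vertSet B ⊆ {u, v}) :
    IsCycleSet (A ∪ B) := by
  obtain ⟨p, hp, hA⟩ := isPathSet_iff_top.1 hA
  obtain ⟨q, hq, hB⟩ := isPathSet_iff_top.1 hB.reverse
  have hu : u ∉ p.support.tail := (List.nodup_cons.1 (p.cons_tail_support ▸ hp.support_nodup)).1
  have hv : v ∉ q.support.tail := (List.nodup_cons.1 (q.cons_tail_support ▸ hq.support_nodup)).1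
  refine isCycleSet_iff_top.2 ⟨u, p.append q, (Walk.isCycle_def _).2 ⟨?_, ?_, ?_⟩, fun e => ?_⟩
  · rw [Walk.isTrail_append]
    exact ⟨hp.isTrail, hq.isTrail, List.disjoint_left.2 fun _ hep heq =>
      hue.ne_of_mem ((hA _).2 hep) ((hB _).2 heq) rfl⟩
  · exact fun h => huv (Walk.nil_append_iff.1 (h ▸ Walk.Nil.nil)).1.eq
  · rw [Walk.tail_support_append, List.nodup_append]
    refine ⟨hp.support_nodup.sublist (List.tail_sublist _),
      hq.support_nodup.sublist (List.tail_sublist _), ?_⟩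
    rintro x hxp _ hxq rfl
    have hxA := ((mem_support_iff_eq_start_or_mem_vertSet hA).1
      (List.mem_of_mem_tail hxp)).resolve_left fun h => hu (h ▸ hxp)
    have hxB := ((mem_support_iff_eq_start_or_mem_vertSet hB).1
      (List.mem_of_mem_tail hxq)).resolve_left fun h => hv (h ▸ hxq)
    rcases hvs ⟨hxA, hxB⟩ with rfl | rfl
    exacts [hu hxp, hv hxq]
  · rw [uedges_union, Set.mem_union, hA, hB, Walk.edges_append, List.mem_append]

end IsPathSet

lemma IsCycleSet.exists_split {C : Finset (Sym2 V × K)} {u v : V} (hC : IsCycleSet C)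
    (hu : u ∈ vertSet C) (hv : v ∈ vertSet C) (huv : u ≠ v) :
    ∃ Q₁ Q₂, Q₁ ∪ Q₂ = C ∧ Disjoint Q₁ Q₂ ∧ IsPathSet Q₁ u v ∧ IsPathSet Q₂ u v := by
  obtain ⟨w, c, hc, hC⟩ := isCycleSet_iff_top.1 hC
  have huc := (mem_support_iff_eq_end_or_mem_vertSet hC).2 (Or.inr hu)
  set c' := c.rotate u huc
  have hC' : ∀ e, e ∈ uedges C ↔ e ∈ c'.edges :=
    fun e => (hC e).trans (c.rotate_edges u huc).perm.mem_iff.symm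
  have hvc := (mem_support_iff_eq_end_or_mem_vertSet hC').2 (Or.inr hv)
  have hspec := c'.take_spec hvc
  have hqr : c'.edges = (c'.takeUntil v hvc).edges ++ (c'.dropUntil v hvc).edges := by
    rw [← Walk.edges_append, hspec]
  have hc' : c'.IsCycle := hc.rotate huc
  obtain ⟨A, B, hAB, hdisj, hA, hB⟩ := exists_union_eq_of_mem_uedges_iff_append
    (by rwa [← hqr]) (hqr ▸ hc'.isTrail.edges_nodup)
  refine ⟨A, B, hAB, hdisj, isPathSet_iff_top.2 ⟨_, hc'.isPath_takeUntil hvc, hA⟩,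
    (isPathSet_iff_top.2 ⟨_, ?_, hB⟩).reverse⟩
  rw [← hspec] at hc'
  exact hc'.isPath_of_append_right (Walk.not_nil_of_ne huv)

/-- An `X`-path in the sense of Diestel. -/
def IsXPath (X P : Finset (Sym2 V × K)) (u v : V) : Prop :=
  u ≠ v ∧ u ∈ vertSet X ∧ v ∈ vertSet X ∧ IsPathSet P u v ∧
    Disjoint (uedges P) (uedges X) ∧ vertSet P ∩ vertSet X ⊆ {u, v}

omit [DecidableEq V] [DecidableEq K] in
lemma IsXPath.disjoint {X P : Finset (Sym2 V × K)} {u v : V} (h : IsXPath X P u v) :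
    Disjoint P X :=
  disjoint_of_disjoint_uedges h.2.2.2.2.1

section XPath

variable {X : Finset (Sym2 V × K)} {e₀ : Sym2 V × K}

/-- A shortest subpath through `e₀` between two vertices of `X` is an `X`-path. -/
lemma IsPathSet.exists_isXPath_subset (he₀X : e₀.1 ∉ uedges X) {P : Finset (Sym2 V × K)}
    {u v : V} (hP : IsPathSet P u v) (huv : u ≠ v) (hu : u ∈ vertSet X) (hv : v ∈ vertSet X)
    (he₀ : e₀ ∈ P) : ∃ Q ⊆ P, ∃ u' v', IsXPath X Q u' v' := by
  induction hn : P.card using Nat.strong_induction_on generalizing P u v with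
  | _ n ih =>
  by_cases hmid : ∃ x ∈ vertSet P ∩ vertSet X, x ≠ u ∧ x ≠ v
  · obtain ⟨x, ⟨hxP, hxX⟩, hxu, hxv⟩ := hmid
    obtain ⟨A, B, rfl, hAB, hA, hB, -⟩ := hP.exists_split hxP
    have hcard := card_union_of_disjoint hAB
    have hApos := card_pos.2 (hA.nonempty hxu.symm)
    have hBpos := card_pos.2 (hB.nonempty hxv)
    rcases mem_union.1 he₀ with he | he
    · obtain ⟨Q, hQ, hQX⟩ := ih _ (by omega) hA hxu.symm hu hxX he rfl
      exact ⟨Q, hQ.trans subset_union_left, hQX⟩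
    · obtain ⟨Q, hQ, hQX⟩ := ih _ (by omega) hB hxv hxX hv he rfl
      exact ⟨Q, hQ.trans subset_union_right, hQX⟩
  push Not at hmid
  have hends : ∀ x ∈ vertSet P ∩ vertSet X, x = u ∨ x = v := fun x hx =>
    or_iff_not_imp_left.2 (hmid x hx)
  refine ⟨P, subset_rfl, u, v, huv, hu, hv, hP, Set.disjoint_left.2 fun e heP heX => ?_, hends⟩
  have he : e = s(u, v) := Sym2.eq_mk_of_forall_mem_eq_or_eq (hP.not_isDiag heP) fun x hx =>
    hends x ⟨mem_vertSet_iff.2 ⟨e, heP, hx⟩, mem_vertSet_iff.2 ⟨e, heX, hx⟩⟩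
  subst he
  exact he₀X (hP.forall_mem_uedges_eq heP _ ⟨_, he₀⟩ ▸ heX)

lemma IsCycleSet.exists_isXPath_subset {C : Finset (Sym2 V × K)} (hC : IsCycleSet C)
    (he₀ : e₀ ∈ C) (he₀X : e₀.1 ∉ uedges X) {u v : V} (huv : u ≠ v)
    (hu : u ∈ vertSet C ∩ vertSet X) (hv : v ∈ vertSet C ∩ vertSet X) :
    ∃ Q ⊆ C, ∃ u' v', IsXPath X Q u' v' := by
  obtain ⟨Q₁, Q₂, rfl, -, hQ₁, hQ₂⟩ := hC.exists_split hu.1 hv.1 huv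
  rcases mem_union.1 he₀ with he | he
  · obtain ⟨Q, hQ, hQX⟩ := hQ₁.exists_isXPath_subset he₀X huv hu.2 hv.2 he
    exact ⟨Q, hQ.trans subset_union_left, hQX⟩
  · obtain ⟨Q, hQ, hQX⟩ := hQ₂.exists_isXPath_subset he₀X huv hu.2 hv.2 he
    exact ⟨Q, hQ.trans subset_union_right, hQX⟩

end XPath

def HasOddRainbowPathPair (X : Finset (Sym2 V × K)) (u v : V) : Prop :=
  ∃ Q₁ ⊆ X, ∃ Q₂ ⊆ X, IsPathSet Q₁ u v ∧ IsPathSet Q₂ u v ∧ Rainbow Q₁ ∧ Rainbow Q₂ ∧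
    Odd (Q₁.card + Q₂.card)

namespace HasOddRainbowPathPair

variable {X Y R : Finset (Sym2 V × K)} {u v w : V}

omit [DecidableEq V] [DecidableEq K] in
lemma mono (h : HasOddRainbowPathPair X u v) (hXY : X ⊆ Y) : HasOddRainbowPathPair Y u v :=
  let ⟨Q₁, h₁, Q₂, h₂, hrest⟩ := h
  ⟨Q₁, h₁.trans hXY, Q₂, h₂.trans hXY, hrest⟩

omit [DecidableEq V] [DecidableEq K] in
lemma symm (h : HasOddRainbowPathPair X u v) : HasOddRainbowPathPair X v u :=
  let ⟨Q₁, h₁, Q₂, h₂, hQ₁, hQ₂, hrest⟩ := h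
  ⟨Q₁, h₁, Q₂, h₂, hQ₁.reverse, hQ₂.reverse, hrest⟩

lemma of_isCycleSet (hY : IsCycleSet Y) (hr : Rainbow Y) (hodd : Odd Y.card)
    (hu : u ∈ vertSet Y) (hv : v ∈ vertSet Y) (huv : u ≠ v) : HasOddRainbowPathPair Y u v := by
  obtain ⟨Q₁, Q₂, rfl, hdisj, h₁, h₂⟩ := hY.exists_split hu hv huv
  exact ⟨Q₁, subset_union_left, Q₂, subset_union_right, h₁, h₂, hr.mono subset_union_left,
    hr.mono subset_union_right, card_union_of_disjoint hdisj ▸ hodd⟩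

lemma append (h : HasOddRainbowPathPair Y u w) (hR : IsPathSet R w v)
    (hYR : vertSet Y ∩ vertSet R ⊆ {w}) (hrb : Rainbow (Y ∪ R)) :
    HasOddRainbowPathPair (Y ∪ R) u v := by
  obtain ⟨Q₁, h₁, Q₂, h₂, hQ₁, hQ₂, -, -, hodd⟩ := h
  have hsub : ∀ {Q}, Q ⊆ Y → Q ∪ R ⊆ Y ∪ R := fun hQ => union_subset_union hQ subset_rfl
  have hvert : ∀ {Q}, Q ⊆ Y → vertSet Q ∩ vertSet R ⊆ {w} := fun hQ =>
    (Set.inter_subset_inter_left _ (vertSet_mono hQ)).trans hYR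
  refine ⟨Q₁ ∪ R, hsub h₁, Q₂ ∪ R, hsub h₂, hQ₁.union hR (hvert h₁), hQ₂.union hR (hvert h₂),
    hrb.mono (hsub h₁), hrb.mono (hsub h₂), ?_⟩
  rw [card_union_of_disjoint (hQ₁.disjoint_of_vertSet_inter_subset (hvert h₁)),
    card_union_of_disjoint (hQ₂.disjoint_of_vertSet_inter_subset (hvert h₂))]
  convert hodd.add_even (even_two_mul R.card) using 1
  ring

/-- One of the two halves of the ear `B` at `v` avoids `e`; continuing the two `u`–`w` arcs of
the odd cycle `Y` along that half, from its end `w ∈ {s, t}`, gives the pair. -/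
lemma of_ear (hY : IsCycleSet Y) (hodd : Odd Y.card) {B : Finset (Sym2 V × K)} {s t : V}
    (hB : IsPathSet B s t) (hs : s ∈ vertSet Y) (ht : t ∈ vertSet Y)
    (hYB : vertSet Y ∩ vertSet B ⊆ {s, t}) {e : Sym2 V × K} (he : e ∈ B) (heY : e ∉ Y)
    (hrb : Rainbow ((Y ∪ B).erase e)) (hu : u ∈ vertSet Y) (hus : u ≠ s) (hut : u ≠ t)
    (hv : v ∈ vertSet B) (hvY : v ∉ vertSet Y) : HasOddRainbowPathPair (Y ∪ B) u v := by
  obtain ⟨B₁, B₂, rfl, hdisj, hB₁, hB₂, hB₁₂⟩ := hB.exists_split hv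
  have hvs : v ≠ s := fun h => hvY (h ▸ hs)
  have hvt : v ≠ t := fun h => hvY (h ▸ ht)
  have hYr : Rainbow Y := hrb.mono (subset_erase.2 ⟨subset_union_left, heY⟩)
  have key : ∀ {R w}, R ⊆ B₁ ∪ B₂ → e ∉ R → IsPathSet R w v → w ∈ vertSet Y → u ≠ w →
      vertSet Y ∩ vertSet R ⊆ {w} → HasOddRainbowPathPair (Y ∪ (B₁ ∪ B₂)) u v :=
    fun hRB heR hR hw huw hYR =>
      ((of_isCycleSet hY hYr hodd hu hw huw).append hR hYR (hrb.mono (subset_erase.2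
        ⟨union_subset_union subset_rfl hRB, by simp [heY, heR]⟩))).mono
        (union_subset_union subset_rfl hRB)
  by_cases he₁ : e ∈ B₁
  · refine key subset_union_right (disjoint_left.1 hdisj he₁) hB₂.reverse ht hut
      fun x ⟨hxY, hxB₂⟩ => ?_
    rcases hYB ⟨hxY, vertSet_mono subset_union_right hxB₂⟩ with rfl | h
    · exact absurd (hB₁₂ ⟨hB₁.start_mem_vertSet hvs.symm, hxB₂⟩) hvs.symm
    · exact h
  · refine key subset_union_left he₁ hB₁ hs hus fun x ⟨hxY, hxB₁⟩ => ?_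
    rcases hYB ⟨hxY, vertSet_mono subset_union_left hxB₁⟩ with h | rfl
    · exact h
    · exact absurd (hB₁₂ ⟨hxB₁, hB₂.end_mem_vertSet hvt⟩) hvt.symm

end HasOddRainbowPathPair

section Clash

variable {G : Finset (Sym2 V × K)}

omit [DecidableEq V] in
lemma colorSet_eq_coe_image : colorSet G = ↑(G.image Prod.snd) := by
  ext c
  simp [colorSet]

omit [DecidableEq V] in
lemma rainbow_iff_card_image : Rainbow G ↔ (G.image Prod.snd).card = G.card := by
  rw [card_image_iff]
  exact ⟨fun h p hp q hq => h p hp q hq, fun h p hp q hq => h hp hq⟩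

lemma rainbow_erase_of_card_image_eq (h : (G.image Prod.snd).card = G.card - 1)
    {e e' : Sym2 V × K} (he : e ∈ G) (he' : e' ∈ G) (hne : e ≠ e') (hc : e.2 = e'.2) :
    Rainbow (G.erase e) := by
  rw [rainbow_iff_card_image, card_erase_of_mem he, ← h]
  congr 1
  ext c
  simp only [mem_image, mem_erase]
  refine ⟨fun ⟨p, ⟨_, hp⟩, hpc⟩ => ⟨p, hp, hpc⟩, fun ⟨p, hp, hpc⟩ => ?_⟩
  by_cases hpe : p = e
  · exact ⟨e', ⟨hne.symm, he'⟩, hc ▸ hpe ▸ hpc⟩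
  · exact ⟨p, ⟨hpe, hp⟩, hpc⟩

lemma exists_clash (h : (colorSet G).ncard = G.card - 1) (hG : G.Nonempty) :
    ∃ e₁ ∈ G, ∃ e₂ ∈ G, e₁ ≠ e₂ ∧ e₁.2 = e₂.2 ∧ Rainbow (G.erase e₁) ∧ Rainbow (G.erase e₂) := by
  rw [colorSet_eq_coe_image, Set.ncard_coe_finset] at h
  have hnr : ¬ Rainbow G := by
    rw [rainbow_iff_card_image, h]
    have := card_pos.2 hG
    omega
  simp only [Rainbow, not_forall] at hnr
  obtain ⟨e₁, he₁, e₂, he₂, hc, hne⟩ := hnr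
  exact ⟨e₁, he₁, e₂, he₂, hne, hc, rainbow_erase_of_card_image_eq h he₁ he₂ hne hc,
    rainbow_erase_of_card_image_eq h he₂ he₁ (Ne.symm hne) hc.symm⟩

end Clash

section Theta

variable {A B Z : Finset (Sym2 V × K)} {s t u v : V} {e₁ e₂ : Sym2 V × K}

/-- The cycles `A ∪ Z` and `B ∪ Z` each miss one clash edge, so they are rainbow; once both are
odd, `u` and `v` either lie on a common one of them or, up to order, `u` lies on `A ∪ Z` only and
`v` on the ear `B` of `A ∪ Z` only. -/
lemma containsRainbowEvenCycle_or_hasOddRainbowPathPair_of_theta (hst : s ≠ t)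
    (hA : IsPathSet A s t) (hB : IsPathSet B s t) (hZ : IsPathSet Z s t)
    (hAB : vertSet A ∩ vertSet B ⊆ {s, t}) (hAZ : vertSet A ∩ vertSet Z ⊆ {s, t})
    (hBZ : vertSet B ∩ vertSet Z ⊆ {s, t}) (eAB : Disjoint (uedges A) (uedges B))
    (eAZ : Disjoint (uedges A) (uedges Z)) (eBZ : Disjoint (uedges B) (uedges Z))
    (hs : Simple (A ∪ B ∪ Z)) (he₁ : e₁ ∈ A) (he₂ : e₂ ∈ B)
    (hr₁ : Rainbow ((A ∪ B ∪ Z).erase e₁)) (hr₂ : Rainbow ((A ∪ B ∪ Z).erase e₂))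
    (hu : u ∈ vertSet (A ∪ B ∪ Z)) (hv : v ∈ vertSet (A ∪ B ∪ Z)) (huv : u ≠ v) :
    ContainsRainbowEvenCycle (A ∪ B ∪ Z) ∨ HasOddRainbowPathPair (A ∪ B ∪ Z) u v := by
  have hAZX : A ∪ Z ⊆ A ∪ B ∪ Z := union_subset_union subset_union_left subset_rfl
  have hBZX : B ∪ Z ⊆ A ∪ B ∪ Z := union_subset_union subset_union_right subset_rfl
  have he₂AZ : e₂ ∉ A ∪ Z := disjoint_left.1 (disjoint_union_right.2
    ⟨(disjoint_of_disjoint_uedges eAB).symm, disjoint_of_disjoint_uedges eBZ⟩) he₂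
  have he₁BZ : e₁ ∉ B ∪ Z := disjoint_left.1 (disjoint_union_right.2
    ⟨disjoint_of_disjoint_uedges eAB, disjoint_of_disjoint_uedges eAZ⟩) he₁
  have hAZr : Rainbow (A ∪ Z) := hr₂.mono (subset_erase.2 ⟨hAZX, he₂AZ⟩)
  have hBZr : Rainbow (B ∪ Z) := hr₁.mono (subset_erase.2 ⟨hBZX, he₁BZ⟩)
  have hAZc := hA.union_isCycleSet hZ hst eAZ hAZ
  have hBZc := hB.union_isCycleSet hZ hst eBZ hBZ
  rcases Nat.even_or_odd (A ∪ Z).card with hev | hAZo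
  · exact .inl ⟨A ∪ Z, hAZX, hs.mono hAZX, hAZr, hAZc, hev⟩
  rcases Nat.even_or_odd (B ∪ Z).card with hev | hBZo
  · exact .inl ⟨B ∪ Z, hBZX, hs.mono hBZX, hBZr, hBZc, hev⟩
  right
  have onAZ : ∀ {x y}, x ∈ vertSet (A ∪ Z) → y ∈ vertSet (A ∪ Z) → x ≠ y →
      HasOddRainbowPathPair (A ∪ B ∪ Z) x y := fun hx hy hxy =>
    (HasOddRainbowPathPair.of_isCycleSet hAZc hAZr hAZo hx hy hxy).mono hAZX
  have onBZ : ∀ {x y}, x ∈ vertSet (B ∪ Z) → y ∈ vertSet (B ∪ Z) → x ≠ y →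
      HasOddRainbowPathPair (A ∪ B ∪ Z) x y := fun hx hy hxy =>
    (HasOddRainbowPathPair.of_isCycleSet hBZc hBZr hBZo hx hy hxy).mono hBZX
  have hsZ := hZ.start_mem_vertSet hst
  have htZ := hZ.end_mem_vertSet hst
  have hAZB : vertSet (A ∪ Z) ∩ vertSet B ⊆ {s, t} := by
    rw [vertSet_union, Set.union_inter_distrib_right]
    exact Set.union_subset hAB (Set.inter_comm _ _ ▸ hBZ)
  have ear : ∀ {x y}, x ∈ vertSet (A ∪ Z) → x ∉ vertSet (B ∪ Z) → y ∈ vertSet B →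
      y ∉ vertSet (A ∪ Z) → HasOddRainbowPathPair (A ∪ B ∪ Z) x y := fun hx hxBZ hy hyAZ => by
    rw [union_right_comm] at hr₂ ⊢
    exact .of_ear hAZc hAZo hB (vertSet_mono subset_union_right hsZ)
      (vertSet_mono subset_union_right htZ) hAZB he₂ he₂AZ hr₂ hx
      (fun h => hxBZ (vertSet_mono subset_union_right (h ▸ hsZ)))
      (fun h => hxBZ (vertSet_mono subset_union_right (h ▸ htZ))) hy hyAZ
  simp only [vertSet_union, Set.mem_union] at hu hv onAZ onBZ ear
  by_cases huA : u ∈ vertSet A ∨ u ∈ vertSet Z <;> by_cases hvA : v ∈ vertSet A ∨ v ∈ vertSet Z <;>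
    by_cases huB : u ∈ vertSet B ∨ u ∈ vertSet Z <;> by_cases hvB : v ∈ vertSet B ∨ v ∈ vertSet Z
  all_goals first
    | exact onAZ huA hvA huv | exact onBZ huB hvB huv
    | exact ear huA huB (by tauto) hvA | exact (ear hvA hvB (by tauto) huA).symm
    | tauto

end Theta

lemma IsBadPiece.containsRainbowEvenCycle_or_hasOddRainbowPathPair {X : Finset (Sym2 V × K)}
    (hX : IsBadPiece X) {u v : V} (hu : u ∈ vertSet X) (hv : v ∈ vertSet X) (huv : u ≠ v) :
    ContainsRainbowEvenCycle X ∨ HasOddRainbowPathPair X u v := by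
  obtain ⟨hXs, hcol, -, s, t, hst, P, rfl, hP, hV, hE⟩ := hX
  have hmem : ∀ {p}, p ∈ P 0 ∪ P 1 ∪ P 2 ↔ ∃ i, p ∈ P i := by
    simp [Fin.exists_fin_succ]
  obtain ⟨e₁, he₁, e₂, he₂, hne, hc, hr₁, hr₂⟩ :=
    exists_clash hcol (((hP 0).1.nonempty hst).mono fun _ h => hmem.2 ⟨0, h⟩)
  obtain ⟨a, ha⟩ := hmem.1 he₁
  obtain ⟨b, hb⟩ := hmem.1 he₂
  have hab : a ≠ b := fun h => hne ((hP a).2 _ ha _ (h ▸ hb) hc)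
  obtain ⟨c, hca, hcb, habc⟩ : ∃ c, c ≠ a ∧ c ≠ b ∧ ∀ i, i = a ∨ i = b ∨ i = c := by
    clear ha hb
    revert a b
    decide
  have hX : P 0 ∪ P 1 ∪ P 2 = P a ∪ P b ∪ P c := by
    ext p
    rw [hmem]
    simp only [mem_union]
    refine ⟨fun ⟨i, h⟩ => ?_, fun h => ?_⟩
    · rcases habc i with rfl | rfl | rfl <;> tauto
    · rcases h with (h | h) | h <;> exact ⟨_, h⟩
  rw [hX] at hu hv hXs hr₁ hr₂ ⊢
  have hV' : ∀ {i j}, i ≠ j → vertSet (P i) ∩ vertSet (P j) ⊆ {s, t} := fun h =>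
    (hV _ _ h).subset
  have hE' : ∀ {i j}, i ≠ j → Disjoint (uedges (P i)) (uedges (P j)) := fun h =>
    Set.disjoint_iff_inter_eq_empty.2 (hE _ _ h)
  exact containsRainbowEvenCycle_or_hasOddRainbowPathPair_of_theta hst (hP a).1 (hP b).1
    (hP c).1 (hV' hab) (hV' hca.symm) (hV' hcb.symm) (hE' hab) (hE' hca.symm) (hE' hcb.symm)
    hXs ha hb hr₁ hr₂ hu hv huv

lemma IsXPath.containsRainbowEvenCycle_union {X P : Finset (Sym2 V × K)} {u v : V}
    (hP : IsXPath X P u v) (h : HasOddRainbowPathPair X u v) (hPs : Simple P) (hXs : Simple X)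
    (hPr : Rainbow P) (hcol : Disjoint (colorSet P) (colorSet X)) :
    ContainsRainbowEvenCycle (P ∪ X) := by
  obtain ⟨huv, -, -, hP, hPX, hvert⟩ := hP
  obtain ⟨Q₁, h₁, Q₂, h₂, hQ₁, hQ₂, hr₁, hr₂, hodd⟩ := h
  have glue : ∀ {Q}, Q ⊆ X → IsPathSet Q u v → Rainbow Q → Even (P.card + Q.card) →
      ContainsRainbowEvenCycle (P ∪ X) := by
    intro Q hQX hQ hQr hev
    have hue : Disjoint (uedges P) (uedges Q) := hPX.mono_right (uedges_mono hQX)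
    refine ContainsRainbowEvenCycle.mono ⟨P ∪ Q, subset_rfl, hPs.union (hXs.mono hQX) hue,
      hPr.union hQr (hcol.mono_right (colorSet_mono hQX)), hP.union_isCycleSet hQ huv hue
      ((Set.inter_subset_inter_right _ (vertSet_mono hQX)).trans hvert), ?_⟩
      (union_subset_union subset_rfl hQX)
    rwa [card_union_of_disjoint (disjoint_of_disjoint_uedges hue)]
  rcases Nat.even_or_odd (P.card + Q₁.card) with hev | hodd₁
  · exact glue h₁ hQ₁ hr₁ hev
  · refine glue h₂ hQ₂ hr₂ (Nat.even_iff.2 ?_)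
    have := Nat.odd_iff.1 hodd
    have := Nat.odd_iff.1 hodd₁
    omega

/-- Let `C` be a rainbow cycle and `X` either a rainbow cycle or a bad
piece, with the colors of `X` disjoint from those of `C \ X`, and with `C` having an
edge whose vertex pair is not an edge of `X`. If `C` and `X` share at least two
vertices, then `C ∪ X` contains a rainbow even cycle. -/
theorem rainbow_cycle_meets_part_gives_rainbow_even_cycle
    (C X : Finset (Sym2 V × K))
    (hC : Simple C ∧ Rainbow C ∧ IsCycleSet C)
    (hX : (Simple X ∧ Rainbow X ∧ IsCycleSet X) ∨ IsBadPiece X)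
    (hcolors : Disjoint (colorSet X) (colorSet (C \ X)))
    (hedge : ∃ p ∈ C, p.1 ∉ uedges X)
    (hmeet : ∃ v₁ v₂ : V, v₁ ≠ v₂ ∧ v₁ ∈ vertSet C ∩ vertSet X ∧
      v₂ ∈ vertSet C ∩ vertSet X) :
    ContainsRainbowEvenCycle (C ∪ X) := by
  obtain ⟨hCs, hCr, hCc⟩ := hC
  obtain ⟨e₀, he₀, he₀X⟩ := hedge
  obtain ⟨v₁, v₂, hne, h₁, h₂⟩ := hmeet
  obtain ⟨P, hPC, u, v, hP⟩ := hCc.exists_isXPath_subset he₀ he₀X hne h₁ h₂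
  have hPCX : P ⊆ C \ X := subset_sdiff.2 ⟨hPC, hP.disjoint⟩
  have hXs : Simple X := hX.elim (·.1) (·.1)
  have hdich : ContainsRainbowEvenCycle X ∨ HasOddRainbowPathPair X u v := by
    obtain ⟨huv, hu, hv, -⟩ := hP
    rcases hX with ⟨-, hXr, hXc⟩ | hXb
    · rcases Nat.even_or_odd X.card with hev | hodd
      · exact .inl ⟨X, subset_rfl, hXs, hXr, hXc, hev⟩
      · exact .inr (.of_isCycleSet hXc hXr hodd hu hv huv)
    · exact hXb.containsRainbowEvenCycle_or_hasOddRainbowPathPair hu hv huv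
  rcases hdich with hXe | hpair
  · exact hXe.mono subset_union_right
  · exact (hP.containsRainbowEvenCycle_union hpair (hCs.mono hPC) hXs (hCr.mono hPC)
      (hcolors.symm.mono_left (colorSet_mono hPCX))).mono (union_subset_union hPC subset_rfl)
end

section
/- Suppose F is a Frankenstein graph and P ⊆ F is a path with endpoints s and t. Then there exists a rainbow path P' ⊆ F with the same endpoints s and t. -/
/-! Colored graphs encoded as finite sets of (vertex pair, color) entries. -/

variable {V K : Type*} [DecidableEq V] [DecidableEq K]

/-!
Every part of a Frankenstein graph is rainbow or rainbow connected: a bad piece repeats a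
single color, and two of its vertices can be joined through one terminal along two of its
three paths while avoiding one of the two equally colored edges. Reroute an `s`-`t` walk
part by part, replacing its stretch between the first and last visit to a bad piece by a
rainbow walk inside the piece. Since parts share at most one vertex this does not touch the
edges of other parts, and since parts have disjoint colors the final walk is rainbow; its
shortcut to a path stays rainbow.
-/
section

omit [DecidableEq V] [DecidableEq K]

def RainbowOn (B : Finset (Sym2 V × K)) (E : Set (Sym2 V)) : Prop :=
  ∀ e ∈ E, ∀ e' ∈ E, ∀ c, (e, c) ∈ B → (e', c) ∈ B → e = e'

def RainbowConnected (B : Finset (Sym2 V × K)) : Prop :=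
  ∀ x ∈ vertSet B, ∀ y ∈ vertSet B, ∃ Q : (graphOf B).Walk x y, RainbowOn B Q.edgeSet

variable {B : Finset (Sym2 V × K)}

theorem RainbowOn.of_forall_mem_uedges {E E' : Set (Sym2 V)} (h : RainbowOn B E)
    (hE : ∀ e ∈ E', e ∈ uedges B → e ∈ E) : RainbowOn B E' :=
  fun e he e' he' c hc hc' => h e (hE e he ⟨c, hc⟩) e' (hE e' he' ⟨c, hc'⟩) c hc hc'

theorem RainbowOn.mono {E E' : Set (Sym2 V)} (h : RainbowOn B E) (hE : E' ⊆ E) :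
    RainbowOn B E' :=
  h.of_forall_mem_uedges fun _ he _ => hE he

theorem Rainbow.rainbowOn (hB : Rainbow B) (E : Set (Sym2 V)) : RainbowOn B E :=
  fun _ _ _ _ _ hc hc' => congrArg Prod.fst (hB _ hc _ hc' rfl)

theorem rainbowOn_of_injOn_diff {r : Sym2 V × K} (hr : Set.InjOn Prod.snd (↑B \ {r}))
    {E : Set (Sym2 V)} (hE : r.1 ∉ E) : RainbowOn B E := by
  intro e he e' he' c hc hc'
  have hne : ∀ {f}, f ∈ E → (f, c) ≠ r := fun hf h => hE (by rwa [← h])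
  exact congrArg Prod.fst (hr ⟨hc, hne he⟩ ⟨hc', hne he'⟩ rfl)

theorem graphOf_mono {G H : Finset (Sym2 V × K)} (h : G ⊆ H) : graphOf G ≤ graphOf H :=
  SimpleGraph.fromEdgeSet_mono fun _ ⟨c, hc⟩ => ⟨c, h hc⟩

theorem mem_uedges_of_mem_edges {u v : V} {W : (graphOf B).Walk u v} {e : Sym2 V}
    (he : e ∈ W.edges) : e ∈ uedges B := by
  have := W.edges_subset_edgeSet he
  rw [graphOf, SimpleGraph.edgeSet_fromEdgeSet] at this
  exact this.1

theorem mem_vertSet_of_mem_uedges {e : Sym2 V} {v : V} (he : e ∈ uedges B) (hv : v ∈ e) :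
    v ∈ vertSet B :=
  let ⟨c, hc⟩ := he
  ⟨(e, c), hc, hv⟩

theorem mem_support_of_mem_vertSet {s t v : V} {W : (graphOf B).Walk s t}
    (hW : ∀ e, e ∈ uedges B ↔ e ∈ W.edges) (hv : v ∈ vertSet B) : v ∈ W.support :=
  let ⟨p, hp, hvp⟩ := hv
  W.mem_support_of_mem_edges ((hW p.1).1 ⟨p.2, hp⟩) hvp

theorem notMem_uedges_of_subsingleton {B' : Finset (Sym2 V × K)}
    (hV : (vertSet B ∩ vertSet B').Subsingleton) (hloop : ∀ p ∈ B, ¬ p.1.IsDiag)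
    {e : Sym2 V} (he : e ∈ uedges B) : e ∉ uedges B' := by
  intro he'
  obtain ⟨c, hc⟩ := he
  induction e using Sym2.ind with
  | _ u v =>
    refine hloop _ hc (Sym2.mk_isDiag_iff.2 (hV ?_ ?_)) <;>
      exact ⟨mem_vertSet_of_mem_uedges ⟨c, hc⟩ (by simp),
        mem_vertSet_of_mem_uedges he' (by simp)⟩

theorem Finset.injOn_diff_of_card_image_eq_card_sub_one {α β : Type*} [DecidableEq α]
    [DecidableEq β] {f : α → β} {s : Finset α} (hs : (s.image f).card = s.card - 1)
    {p q : α} (hp : p ∈ s) (hq : q ∈ s) (hpq : p ≠ q) (hf : f p = f q) :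
    Set.InjOn f (↑s \ {p}) := by
  rw [← Finset.coe_erase]
  apply Finset.injOn_of_card_image_eq
  have himage : (s.erase p).image f = s.image f := by
    refine (Finset.image_subset_image (s.erase_subset p)).antisymm fun c hc => ?_
    obtain ⟨r, hr, rfl⟩ := Finset.mem_image.1 hc
    by_cases hrp : r = p
    · exact Finset.mem_image.2 ⟨q, Finset.mem_erase.2 ⟨hpq.symm, hq⟩, hrp ▸ hf.symm⟩
    · exact Finset.mem_image_of_mem f (Finset.mem_erase.2 ⟨hrp, hr⟩)
  rw [himage, hs, Finset.card_erase_of_mem hp]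

namespace SimpleGraph.Walk

variable {G : SimpleGraph V}

theorem exists_prefix_to_first_mem {S : Set V} {u v : V} (W : G.Walk u v)
    (h : ∃ w ∈ W.support, w ∈ S) :
    ∃ x ∈ S, ∃ W₁ : G.Walk u x, W₁.edges ⊆ W.edges ∧ ∀ e ∈ W₁.edges, ∃ w ∈ e, w ∉ S := by
  induction W with
  | nil =>
    obtain ⟨w, hw, hwS⟩ := h
    rw [support_nil, List.mem_singleton] at hw
    exact ⟨_, hw ▸ hwS, nil, by simp, by simp⟩
  | @cons a b c hab q ih =>
    by_cases ha : a ∈ S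
    · exact ⟨a, ha, nil, by simp, by simp⟩
    obtain ⟨x, hx, W₁, hsub, hout⟩ := ih (by simpa [ha] using h)
    refine ⟨x, hx, cons hab W₁, List.cons_subset_cons _ hsub, ?_⟩
    simp only [edges_cons, List.mem_cons, forall_eq_or_imp]
    exact ⟨⟨a, Sym2.mem_mk_left a b, ha⟩, hout⟩

theorem exists_walk_notMem_edges [DecidableEq V] {a b x y : V} (W₁ W₂ : G.Walk a b)
    (hW₁ : W₁.edges.Nodup) (hx : x ∈ W₁.support) (hy : y ∈ W₂.support) {e : Sym2 V}
    (he : e ∉ W₂.edges) :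
    ∃ Q : G.Walk x y, e ∉ Q.edges := by
  have hsplit : e ∉ (W₁.takeUntil x hx).edges ∨ e ∉ (W₁.dropUntil x hx).edges := by
    rw [← W₁.take_spec hx, edges_append] at hW₁
    exact not_and_or.1 fun h => List.disjoint_of_nodup_append hW₁ h.1 h.2
  rcases hsplit with h | h
  · refine ⟨(W₁.takeUntil x hx).reverse.append (W₂.takeUntil y hy), ?_⟩
    simpa [edges_append, h] using fun h' => he (W₂.edges_takeUntil_subset_edges hy h')
  · refine ⟨(W₁.dropUntil x hx).append (W₂.dropUntil y hy).reverse, ?_⟩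
    simpa [edges_append, h] using fun h' => he (W₂.edges_dropUntil_subset_edges hy h')

end SimpleGraph.Walk

theorem colorSet_eq_coe_image_s12 [DecidableEq K] : colorSet B = ↑(B.image Prod.snd) := by
  ext c
  simp [colorSet]

theorem rainbowConnected_of_rainbow_paths {ι : Type*} {P : ι → Finset (Sym2 V × K)} {a b : V}
    (hsimple : ∀ p ∈ B, ∀ q ∈ B, p.1 = q.1 → p = q) (hcol : (colorSet B).ncard = B.card - 1)
    (hB : ∀ p, p ∈ B ↔ ∃ i, p ∈ P i) (hP : ∀ i, IsPathSet (P i) a b ∧ Rainbow (P i)) :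
    RainbowConnected B := by
  classical
  intro x hx y hy
  choose W hWpath hWedges using fun i => (hP i).1
  have hPB : ∀ i, P i ⊆ B := fun i p hp => (hB p).2 ⟨i, hp⟩
  have hvert : ∀ v ∈ vertSet B, ∃ i, v ∈ vertSet (P i) := fun v ⟨p, hp, hvp⟩ =>
    let ⟨i, hpi⟩ := (hB p).1 hp
    ⟨i, p, hpi, hvp⟩
  obtain ⟨p, hp, q, hq, hpq, hc⟩ : ∃ p ∈ B, ∃ q ∈ B, p ≠ q ∧ p.2 = q.2 := by
    have hne : B.Nonempty := let ⟨p, hp, _⟩ := hx; ⟨p, hp⟩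
    refine Finset.exists_ne_map_eq_of_card_lt_of_maps_to (t := B.image Prod.snd) ?_
      fun r hr => Finset.mem_image_of_mem _ hr
    rw [← Set.ncard_coe_finset, ← colorSet_eq_coe_image_s12, hcol]
    exact Nat.sub_one_lt (Finset.card_ne_zero.2 hne)
  have himage : (B.image Prod.snd).card = B.card - 1 := by
    rw [← Set.ncard_coe_finset, ← colorSet_eq_coe_image_s12, hcol]
  obtain ⟨i, hxi⟩ := hvert x hx
  obtain ⟨j, hyj⟩ := hvert y hy
  -- `P j` is rainbow, so one of the two equally colored edges lies off `P j`.
  obtain ⟨r, hr, hrj⟩ : ∃ r, Set.InjOn Prod.snd (↑B \ {r}) ∧ r.1 ∉ uedges (P j) := by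
    have hmem : ∀ r ∈ B, r.1 ∈ uedges (P j) → r ∈ P j := fun r hr ⟨c, hrc⟩ =>
      hsimple r hr _ (hPB j hrc) rfl ▸ hrc
    by_contra! h
    refine hpq ((hP j).2 p (hmem p hp (h p ?_)) q (hmem q hq (h q ?_)) hc)
    · exact Finset.injOn_diff_of_card_image_eq_card_sub_one himage hp hq hpq hc
    · exact Finset.injOn_diff_of_card_image_eq_card_sub_one himage hq hp hpq.symm hc.symm
  obtain ⟨Q, hQ⟩ := SimpleGraph.Walk.exists_walk_notMem_edges
    ((W i).mapLe (graphOf_mono (hPB i))) ((W j).mapLe (graphOf_mono (hPB j)))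
    ((hWpath i).mapLe _).isTrail.edges_nodup
    (by simpa using mem_support_of_mem_vertSet (hWedges i) hxi)
    (by simpa using mem_support_of_mem_vertSet (hWedges j) hyj)
    (e := r.1) (by simpa [← hWedges j] using hrj)
  exact ⟨Q, rainbowOn_of_injOn_diff hr hQ⟩

/-- `W₁ ++ Q ++ W₂`, where `W₁` runs up to the first visit of `W` to `B`, `W₂` leaves
from the last one, and `Q` is a rainbow walk inside `B`. -/
theorem RainbowConnected.exists_walk_rainbowOn {G : SimpleGraph V} (hB : RainbowConnected B)
    (hBG : graphOf B ≤ G) {s t : V} (W : G.Walk s t) :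
    ∃ W' : G.Walk s t, RainbowOn B W'.edgeSet ∧ ∀ e ∈ W'.edges, e ∈ W.edges ∨ e ∈ uedges B := by
  by_cases h : ∃ v ∈ W.support, v ∈ vertSet B
  swap
  · refine ⟨W, fun e he _ _ c hc _ => absurd ?_ h, fun e he => .inl he⟩
    exact ⟨_, W.mem_support_of_mem_edges he e.out_fst_mem,
      mem_vertSet_of_mem_uedges ⟨c, hc⟩ e.out_fst_mem⟩
  obtain ⟨x, hx, W₁, hW₁, hout₁⟩ := W.exists_prefix_to_first_mem h
  obtain ⟨y, hy, W₂, hW₂, hout₂⟩ := W.reverse.exists_prefix_to_first_mem (by simpa using h)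
  obtain ⟨Q, hQ⟩ := hB x hx y hy
  have hoff : ∀ e ∈ W₁.edges ++ W₂.edges, e ∉ uedges B := fun e he heB => by
    obtain ⟨w, hwe, hwB⟩ := (List.mem_append.1 he).elim (hout₁ e) (hout₂ e)
    exact hwB (mem_vertSet_of_mem_uedges heB hwe)
  refine ⟨W₁.append ((Q.mapLe hBG).append W₂.reverse), hQ.of_forall_mem_uedges ?_, ?_⟩
  · intro e he heB
    simp only [SimpleGraph.Walk.mem_edgeSet, SimpleGraph.Walk.edges_append,
      SimpleGraph.Walk.edges_mapLe_eq_edges, SimpleGraph.Walk.edges_reverse, List.mem_append,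
      List.mem_reverse] at he ⊢
    rcases he with he | he | he
    · exact absurd heB (hoff e (List.mem_append_left _ he))
    · exact he
    · exact absurd heB (hoff e (List.mem_append_right _ he))
  · intro e he
    simp only [SimpleGraph.Walk.edges_append, SimpleGraph.Walk.edges_mapLe_eq_edges,
      SimpleGraph.Walk.edges_reverse, List.mem_append, List.mem_reverse] at he
    rcases he with he | he | he
    · exact .inl (hW₁ he)
    · exact .inr (mem_uedges_of_mem_edges he)
    · exact .inl (by simpa using hW₂ he)

section Partition

variable {ι : Type*} {parts : ι → Finset (Sym2 V × K)} {F : Finset (Sym2 V × K)}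

theorem rainbowOn_of_forall_rainbowOn_parts (hF : ∀ p, p ∈ F ↔ ∃ i, p ∈ parts i)
    (hC : ∀ i j, i ≠ j → Disjoint (colorSet (parts i)) (colorSet (parts j)))
    {E : Set (Sym2 V)} (h : ∀ i, RainbowOn (parts i) E) : RainbowOn F E := by
  intro e he e' he' c hc hc'
  obtain ⟨i, hi⟩ := (hF _).1 hc
  obtain ⟨j, hj⟩ := (hF _).1 hc'
  obtain rfl : i = j := by
    by_contra hij
    exact Set.disjoint_left.1 (hC i j hij) ⟨e, hi⟩ ⟨e', hj⟩
  exact h i e he e' he' c hi hj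

/-- Rerouting through part `i` only adds edges of part `i`, which lie in no other part, so
the parts treated earlier stay rainbow along the walk. -/
theorem exists_walk_forall_rainbowOn_parts (hF : ∀ p, p ∈ F ↔ ∃ i, p ∈ parts i)
    (hV : ∀ i j, i ≠ j → (vertSet (parts i) ∩ vertSet (parts j)).Subsingleton)
    (hloop : ∀ i, ∀ p ∈ parts i, ¬ p.1.IsDiag)
    (hparts : ∀ i, Rainbow (parts i) ∨ RainbowConnected (parts i))
    {s t : V} (W : (graphOf F).Walk s t) (T : Finset ι) :
    ∃ W' : (graphOf F).Walk s t, ∀ i ∈ T, RainbowOn (parts i) W'.edgeSet := by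
  classical
  induction T using Finset.induction_on with
  | empty => exact ⟨W, by simp⟩
  | @insert i T hiT ih =>
    obtain ⟨W₁, hW₁⟩ := ih
    rcases hparts i with hi | hi
    · exact ⟨W₁, Finset.forall_mem_insert _ _ _ |>.2 ⟨hi.rainbowOn _, hW₁⟩⟩
    obtain ⟨W₂, hW₂i, hW₂⟩ :=
      hi.exists_walk_rainbowOn (graphOf_mono fun p hp => (hF p).2 ⟨i, hp⟩) W₁
    refine ⟨W₂, Finset.forall_mem_insert _ _ _ |>.2 ⟨hW₂i, fun j hj => ?_⟩⟩
    have hji : j ≠ i := ne_of_mem_of_not_mem hj hiT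
    refine (hW₁ j hj).of_forall_mem_uedges fun e he hej => (hW₂ e he).resolve_right ?_
    exact notMem_uedges_of_subsingleton (hV j i hji) (hloop j) hej

end Partition

theorem exists_rainbow_pathSet_of_isPath {F : Finset (Sym2 V × K)} {s t : V}
    {W : (graphOf F).Walk s t} (hW : W.IsPath) (hrb : RainbowOn F W.edgeSet) :
    ∃ P' ⊆ F, Rainbow P' ∧ IsPathSet P' s t := by
  classical
  have huedges : ∀ e, e ∈ uedges (F.filter (·.1 ∈ W.edges)) ↔ e ∈ W.edges := fun e =>
    ⟨fun ⟨_, hc⟩ => (Finset.mem_filter.1 hc).2, fun he =>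
      let ⟨c, hc⟩ := mem_uedges_of_mem_edges he
      ⟨c, Finset.mem_filter.2 ⟨hc, he⟩⟩⟩
  refine ⟨F.filter (·.1 ∈ W.edges), Finset.filter_subset _ _, ?_, ?_⟩
  · intro p hp q hq hpq
    rw [Finset.mem_filter] at hp hq
    exact Prod.ext (hrb _ hp.2 _ hq.2 p.2 hp.1 (hpq ▸ hq.1)) hpq
  · have htransfer : ∀ e ∈ W.edges, e ∈ (graphOf (F.filter (·.1 ∈ W.edges))).edgeSet :=
      fun e he => by
        rw [graphOf, SimpleGraph.edgeSet_fromEdgeSet]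
        exact ⟨(huedges e).2 he, (graphOf F).not_isDiag_of_mem_edgeSet (W.edges_subset_edgeSet he)⟩
    exact ⟨W.transfer _ htransfer, hW.transfer _, by simpa using huedges⟩

end

theorem IsBadPiece.rainbowConnected {B : Finset (Sym2 V × K)} (hB : IsBadPiece B) :
    RainbowConnected B := by
  obtain ⟨hsimple, hcol, -, a, b, -, P, rfl, hP, -, -⟩ := hB
  exact rainbowConnected_of_rainbow_paths hsimple.2 hcol
    (by simp [Fin.exists_fin_succ]) hP

/-- If `F` is a Frankenstein graph and `P ⊆ F` is a path with
terminals `s` and `t`, then there is a rainbow path `P' ⊆ F` with terminals `s, t`. -/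
theorem frankenstein_rainbow_path (F : Finset (Sym2 V × K)) (hF : IsFrankenstein F)
    (P : Finset (Sym2 V × K)) (hPF : P ⊆ F) (s t : V) (hP : IsPathSet P s t) :
    ∃ P' ⊆ F, Rainbow P' ∧ IsPathSet P' s t := by
  obtain ⟨m, parts, -, rfl, hV, hC, hkind, -, -⟩ := hF
  have hmem : ∀ p, p ∈ Finset.univ.biUnion parts ↔ ∃ i, p ∈ parts i := by simp
  have hloop : ∀ i, ∀ p ∈ parts i, ¬ p.1.IsDiag := fun i => by
    rcases hkind i with h | h | h
    exacts [h.1.1, h.1.1, h.1.1]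
  have hparts : ∀ i, Rainbow (parts i) ∨ RainbowConnected (parts i) := fun i => by
    rcases hkind i with h | h | h
    exacts [.inl h.2.1, .inr h.rainbowConnected, .inl h.2.1]
  obtain ⟨W, -, -⟩ := hP
  obtain ⟨W', hW'⟩ := exists_walk_forall_rainbowOn_parts hmem hV hloop hparts
    (W.mapLe (graphOf_mono hPF)) Finset.univ
  have hrb := rainbowOn_of_forall_rainbowOn_parts hmem hC fun i => hW' i (Finset.mem_univ i)
  exact exists_rainbow_pathSet_of_isPath W'.bypass_isPath
    (hrb.mono fun _ he => W'.edges_bypass_subset_edges he)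
end

section
/- Let T be a tree, and let T̄ be the graph obtained from T by adding, for every vertex z and every pair of distinct children x, y of z, the edge xy. Then every cycle D in T̄ satisfies V(D) ⊆ {w} ∪ child_T(w) for some vertex w of T, where, with d the depth of w, all edges of D join vertices of depths d and d+1 or two vertices of equal depth d+1 with a common parent. -/
open SimpleGraph Walk

namespace TreeClosureAux

variable {V : Type*} [DecidableEq V] {T : SimpleGraph V} {r : V}

lemma path_length (hT : T.IsTree) {x : V} {p : T.Walk r x} (hp : p.IsPath) :
    p.length = T.dist r x := by
  obtain ⟨q, hq, hlen⟩ := hT.isConnected.exists_path_of_dist r x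
  rw [(hT.existsUnique_path r x).unique hp hq, hlen]

lemma dist_le_of_mem (hT : T.IsTree) {x v : V} {p : T.Walk r x} (hp : p.IsPath)
    (hv : v ∈ p.support) : T.dist r v ≤ T.dist r x := by
  calc T.dist r v = (p.takeUntil v hv).length := (path_length hT (hp.takeUntil hv)).symm
    _ ≤ p.length := p.length_takeUntil_le hv
    _ = T.dist r x := path_length hT hp

lemma isPath_concat {u x y : V} {p : T.Walk u x} (hp : p.IsPath) (h : T.Adj x y)
    (hy : y ∉ p.support) : (p.concat h).IsPath := by
  rw [← isPath_reverse_iff, reverse_concat]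
  exact hp.reverse.cons (by simpa [support_reverse] using hy)

lemma adj_dist (hT : T.IsTree) {x y : V} (hxy : T.Adj x y) :
    T.dist r y = T.dist r x + 1 ∨ T.dist r x = T.dist r y + 1 := by
  obtain ⟨p, hp, hlen⟩ := hT.isConnected.exists_path_of_dist r x
  by_cases hy : y ∈ p.support
  · right
    have h1 : p.dropUntil y hy = Walk.cons hxy.symm Walk.nil :=
      (hT.existsUnique_path y x).unique (hp.dropUntil hy)
        (Walk.IsPath.nil.cons (by simp [hxy.ne']))
    have h2 := congrArg Walk.length (p.take_spec hy)
    rw [length_append, h1] at h2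
    have h3 := path_length hT (hp.takeUntil hy)
    simp only [length_cons, length_nil] at h2
    omega
  · left
    have := path_length hT (isPath_concat hp hxy hy)
    rw [length_concat] at this
    omega

lemma parent_unique (hT : T.IsTree) {x z z' : V} (hz : T.Adj z x)
    (hdz : T.dist r x = T.dist r z + 1) (hz' : T.Adj z' x)
    (hdz' : T.dist r x = T.dist r z' + 1) : z = z' := by
  obtain ⟨p, hp, hlen⟩ := hT.isConnected.exists_path_of_dist r z
  obtain ⟨p', hp', hlen'⟩ := hT.isConnected.exists_path_of_dist r z'
  have hx : x ∉ p.support := fun hx => by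
    have := dist_le_of_mem hT hp hx; omega
  have hx' : x ∉ p'.support := fun hx => by
    have := dist_le_of_mem hT hp' hx; omega
  have hcat : p.concat hz = p'.concat hz' :=
    (hT.existsUnique_path r x).unique (isPath_concat hp hz hx) (isPath_concat hp' hz' hx')
  have := congrArg (fun q : T.Walk r x => q.reverse.getVert 1) hcat
  simpa [reverse_concat, getVert_cons_succ] using this

lemma parent_exists (hT : T.IsTree) {x : V} (hx : T.dist r x ≠ 0) :
    ∃ w, T.Adj w x ∧ T.dist r x = T.dist r w + 1 := by
  obtain ⟨p, hp, hlen⟩ := hT.isConnected.exists_path_of_dist r x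
  have hlpos : 0 < p.length := by omega
  have hadj : T.Adj (p.getVert (p.length - 1)) x := by
    have := p.adj_getVert_succ (i := p.length - 1) (by omega)
    rwa [show p.length - 1 + 1 = p.length by omega, getVert_length] at this
  have hmem : p.getVert (p.length - 1) ∈ p.support :=
    mem_support_iff_exists_getVert.mpr ⟨p.length - 1, rfl, by omega⟩
  have hle := dist_le_of_mem hT hp hmem
  rcases adj_dist hT hadj with h | h
  · exact ⟨_, hadj, h⟩
  · omega

lemma mem_support_iff_mem_tail {G : SimpleGraph V} {a x : V} {c : G.Walk a a} (hc : ¬c.Nil) :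
    x ∈ c.support ↔ x ∈ c.support.tail := by
  obtain ⟨v, h, q, rfl⟩ := not_nil_iff.mp hc
  rw [support_cons]
  simp only [List.tail_cons, List.mem_cons]
  constructor
  · rintro (rfl | h')
    · exact q.end_mem_support
    · exact h'
  · exact Or.inr

lemma mem_dropLast_reverse {α : Type*} {l : List α} {x : α} (h : x ∈ l.reverse.dropLast) :
    x ∈ l.tail := by
  have h2 : l.reverse.reverse.tail = l.reverse.dropLast.reverse := List.tail_reverse
  rw [List.reverse_reverse] at h2
  rw [h2, List.mem_reverse]
  exact h

lemma dropLast_cons_of_ne_nil {α : Type*} {l : List α} (h : l ≠ []) (a : α) :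
    (a :: l).dropLast = a :: l.dropLast := by
  cases l with
  | nil => exact absurd rfl h
  | cons x xs => rfl

end TreeClosureAux

open TreeClosureAux

/-- Let `T` be a finite rooted tree with root `r` and let `Tbar` be
obtained from `T` by adding an edge between every two distinct children of a common
vertex.  Then every cycle `D` in `Tbar` has all its vertices within two consecutive
depth levels: `V(D) ⊆ {w} ∪ child_T(w)` for some vertex `w`. -/
theorem cycles_of_treeClosure_within_one_level {V : Type*} [Fintype V]
    (T : SimpleGraph V) (hT : T.IsTree) (r : V)
    (Tbar : SimpleGraph V)
    (hTbar : ∀ x y, Tbar.Adj x y ↔ x ≠ y ∧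
      (T.Adj x y ∨ ∃ z, (T.Adj z x ∧ T.dist r x = T.dist r z + 1) ∧
        (T.Adj z y ∧ T.dist r y = T.dist r z + 1)))
    (u : V) (D : Tbar.Walk u u) (hD : D.IsCycle) :
    ∃ w : V, ∀ x ∈ D.support,
      x = w ∨ (T.Adj w x ∧ T.dist r x = T.dist r w + 1) := by
  classical
  obtain ⟨zp, hzp_mem, hzp_max⟩ :=
    D.support.toFinset.exists_max_image (fun v => T.dist r v) ⟨u, by simp⟩
  rw [List.mem_toFinset] at hzp_mem
  have hmax : ∀ v ∈ D.support, T.dist r v ≤ T.dist r zp := fun v hv =>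
    hzp_max v (List.mem_toFinset.mpr hv)
  have hnotnil : ¬D.Nil := by
    have := hD.three_le_length
    rw [nil_iff_length_eq]; omega
  -- the maximum depth is positive
  have hm : T.dist r zp ≠ 0 := by
    intro h0
    obtain ⟨v, hadj, q, hq⟩ := not_nil_iff.mp hnotnil
    have hvr : ∀ y ∈ D.support, y = r := by
      intro y hy
      have := hmax y hy
      exact ((hT.isConnected.dist_eq_zero_iff).mp (by omega)).symm
    have hv : v ∈ D.support := by
      rw [hq, support_cons]; exact List.mem_cons_of_mem _ q.start_mem_support
    exact hadj.ne ((hvr u D.start_mem_support).trans (hvr v hv).symm)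
  obtain ⟨w, hwz, hdzp⟩ := parent_exists hT hm
  have hzpw : zp ≠ w := by intro h; rw [h] at hdzp; omega
  have hzpS : zp = w ∨ (T.Adj w zp ∧ T.dist r zp = T.dist r w + 1) := Or.inr ⟨hwz, hdzp⟩
  -- the step lemma: from a child of `w`, edges with depth ≤ max go back into the set
  have hstep : ∀ x y, T.Adj w x → T.dist r x = T.dist r w + 1 → Tbar.Adj x y →
      T.dist r y ≤ T.dist r zp →
      y = w ∨ (T.Adj w y ∧ T.dist r y = T.dist r w + 1) := by
    intro x y hwx hdx hxy hdy
    rw [hTbar] at hxy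
    obtain ⟨hne', hc | ⟨z, ⟨hzx, hdzx⟩, ⟨hzy, hdzy⟩⟩⟩ := hxy
    · rcases adj_dist (r := r) hT hc with h | h
      · omega
      · exact Or.inl (parent_unique hT hc.symm h hwx hdx)
    · have hzw : z = w := parent_unique hT hzx hdzx hwx hdx
      exact Or.inr ⟨hzw ▸ hzy, by rw [← hzw]; exact hdzy⟩
  -- the key walk lemma
  have key : ∀ (a b : V) (p : Tbar.Walk a b),
      (∀ v ∈ p.support, T.dist r v ≤ T.dist r zp) →
      (a = w ∨ (T.Adj w a ∧ T.dist r a = T.dist r w + 1)) →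
      (∀ v ∈ p.support.dropLast, v ≠ w) →
      ∀ v ∈ p.support, v = w ∨ (T.Adj w v ∧ T.dist r v = T.dist r w + 1) := by
    intro a b p
    induction p with
    | nil =>
      intro _ ha _ v hv
      rw [support_nil, List.mem_singleton] at hv
      exact hv ▸ ha
    | @cons a c b h q ih =>
      intro hdep ha hw v hv
      have hsupd : (Walk.cons h q).support.dropLast = a :: q.support.dropLast := by
        rw [support_cons, dropLast_cons_of_ne_nil (support_ne_nil q)]
      have haw : a ≠ w := hw a (by rw [hsupd]; exact List.mem_cons_self)
      have haS : T.Adj w a ∧ T.dist r a = T.dist r w + 1 := by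
        rcases ha with h' | h'
        · exact absurd h' haw
        · exact h'
      have hcS : c = w ∨ (T.Adj w c ∧ T.dist r c = T.dist r w + 1) :=
        hstep a c haS.1 haS.2 h
          (hdep c (by rw [support_cons]; exact List.mem_cons_of_mem _ q.start_mem_support))
      rw [support_cons, List.mem_cons] at hv
      rcases hv with rfl | hv
      · exact ha
      · exact ih (fun v hv' => hdep v (by rw [support_cons]; exact List.mem_cons_of_mem _ hv'))
          hcS (fun v hv' => hw v (by rw [hsupd]; exact List.mem_cons_of_mem _ hv')) v hv
  -- rotate the cycle so that it starts at `zp`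
  set D' := D.rotate zp hzp_mem with hD'def
  have hD' : D'.IsCycle := hD.rotate hzp_mem
  have hD'nn : ¬D'.Nil := by
    have := hD'.three_le_length
    rw [nil_iff_length_eq]; omega
  have hrot : D'.support.tail ~r D.support.tail := support_rotate D zp hzp_mem
  have hmem_iff : ∀ x, x ∈ D'.support ↔ x ∈ D.support := by
    intro x
    rw [mem_support_iff_mem_tail hD'nn, mem_support_iff_mem_tail hnotnil, hrot.mem_iff]
  have hmax' : ∀ v ∈ D'.support, T.dist r v ≤ T.dist r zp := fun v hv =>
    hmax v ((hmem_iff v).mp hv)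
  by_cases hwD : w ∈ D'.support
  · -- `w` lies on the cycle: split at `w`
    have hspec : (D'.takeUntil w hwD).append (D'.dropUntil w hwD) = D' := D'.take_spec hwD
    have hsupp : D'.support = (D'.takeUntil w hwD).support ++ (D'.dropUntil w hwD).support.tail := by
      conv_lhs => rw [← hspec]
      rw [support_append]
    have htail : D'.support.tail =
        (D'.takeUntil w hwD).support.tail ++ (D'.dropUntil w hwD).support.tail := by
      rw [hsupp]
      conv_lhs => rw [support_eq_cons (D'.takeUntil w hwD)]
      rw [List.cons_append, List.tail_cons]
    have hwq1tail : w ∈ (D'.takeUntil w hwD).support.tail := by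
      have h1 : w ∈ (D'.takeUntil w hwD).support := (D'.takeUntil w hwD).end_mem_support
      rw [support_eq_cons, List.mem_cons] at h1
      rcases h1 with h1 | h1
      · exact absurd h1.symm hzpw
      · exact h1
    have hnodup : ((D'.takeUntil w hwD).support.tail ++ (D'.dropUntil w hwD).support.tail).Nodup :=
      htail ▸ hD'.support_nodup
    have hwq2 : w ∉ (D'.dropUntil w hwD).support.tail :=
      fun h => (List.nodup_append.mp hnodup).2.2 w hwq1tail w h rfl
    -- `w` appears only at the end of `takeUntil`
    have hconcat : (D'.takeUntil w hwD).support.dropLast ++ [w] = (D'.takeUntil w hwD).support := by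
      conv_rhs => rw [← List.dropLast_append_getLast
        (l := (D'.takeUntil w hwD).support) (by simp)]
      rw [getLast_support]
    have hwdl : w ∉ (D'.takeUntil w hwD).support.dropLast := by
      have hcount := D'.count_support_takeUntil_eq_one hwD
      rw [← hconcat, List.count_append] at hcount
      simp only [List.count_singleton] at hcount
      have : (D'.takeUntil w hwD).support.dropLast.count w = 0 := by
        simpa using hcount
      exact List.count_eq_zero.mp this
    have hq1S := key zp w (D'.takeUntil w hwD)
      (fun v hv => hmax' v (D'.support_takeUntil_subset hwD hv)) hzpS
      (fun v hv h' => hwdl (h' ▸ hv))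
    have hq2S := key zp w (D'.dropUntil w hwD).reverse
      (fun v hv => hmax' v (D'.support_dropUntil_subset hwD
        (by rwa [support_reverse, List.mem_reverse] at hv))) hzpS
      (by
        intro v hv h'
        subst h'
        apply hwq2
        rw [support_reverse] at hv
        exact mem_dropLast_reverse hv)
    refine ⟨w, fun x hx => ?_⟩
    have hx' : x ∈ D'.support := (hmem_iff x).mpr hx
    rw [hsupp, List.mem_append] at hx'
    rcases hx' with h' | h'
    · exact hq1S x h'
    · exact hq2S x (by rw [support_reverse, List.mem_reverse]; exact List.mem_of_mem_tail h')
  · -- `w` is not on the cycle at all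
    exact ⟨w, fun x hx => key zp zp D' hmax' hzpS
      (fun v hv h' => hwD (h' ▸ List.dropLast_subset _ hv)) x ((hmem_iff x).mpr hx)⟩
end

section
/- Suppose a rainbow 5-cycle C on vertices v1,...,v5 lies in a multigraph with no rainbow 4-cycle, where edge ei of C has color α_i, and for each i, the edge e_i^- of color α_i adjacent to ei at v_i (distinct from ei, with α_i ≠ α_j for i ≠ j) has both endpoints in {v1,...,v5}. Then V(e_i^-) = {v_{i-1}, v_i} or {v_i, v_{i+3}} (indices mod 5); symmetrically, the edge e_i^+ of color α_i adjacent at v_{i+1} satisfies V(e_i^+) = {v_{i+1}, v_{i+2}} or {v_{i+1}, v_{i+3}}. -/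
/-!
An edge of colour `α i` at `v i` or `v (i + 1)` with both ends on the cycle is either in one of the
claimed positions, or equal to `e i`, or a chord `v j v (j + 2)` of the colour of `e j` or
`e (j + 1)`. Such a chord closes a rainbow 4-cycle with the cycle edges `e (j + 2)`, `e (j + 3)`,
`e (j + 4)`.
-/

namespace SimpleGraph

variable {V ι : Type*}

/-- The colour classes `D c` model a multigraph with coloured edges; `σ` chooses, for each edge of
the cycle, a colour class containing it. -/
def HasRainbowCycle (D : ι → SimpleGraph V) (n : ℕ) : Prop :=
  ∃ (u : V) (W : (⨆ i, D i).Walk u u) (σ : Sym2 V → ι),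
    W.IsCycle ∧ W.length = n ∧
    (∀ e ∈ W.edges, e ∈ (D (σ e)).edgeSet) ∧
    (∀ e ∈ W.edges, ∀ f ∈ W.edges, σ e = σ f → e = f)

theorem Walk.IsCycle.hasRainbowCycle {D : ι → SimpleGraph V} {u : V} {W : (⨆ i, D i).Walk u u}
    (hW : W.IsCycle) {C : List ι} (hC : C.Nodup)
    (hWC : List.Forall₂ (fun e c ↦ e ∈ (D c).edgeSet) W.edges C) :
    HasRainbowCycle D W.length := by
  classical
  have : Nonempty ι := by
    cases C with
    | nil => exact absurd (Walk.edges_eq_nil.mp (List.forall₂_nil_right_iff.mp hWC)) hW.not_nil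
    | cons c _ => exact ⟨c⟩
  have hlen := hWC.length_eq
  have hidx {e} (he : e ∈ W.edges) : W.edges.idxOf e < W.edges.length :=
    List.idxOf_lt_length_iff.mpr he
  refine ⟨u, W, fun e ↦ C.getD (W.edges.idxOf e) (Classical.arbitrary ι), hW, rfl, ?_, ?_⟩
  · intro e he
    dsimp only
    rw [List.getD_eq_getElem _ _ (hlen ▸ hidx he)]
    simpa [List.getElem_idxOf] using hWC.get (hidx he) (hlen ▸ hidx he)
  · intro e he f hf hef
    dsimp only at hef
    rw [List.getD_eq_getElem _ _ (hlen ▸ hidx he), List.getD_eq_getElem _ _ (hlen ▸ hidx hf),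
      hC.getElem_inj_iff] at hef
    exact (List.idxOf_inj he).mp hef

theorem hasRainbowCycle_four (D : ι → SimpleGraph V) {a b c d : V}
    {c₀ c₁ c₂ c₃ : ι} (hV : [a, b, c, d].Nodup) (hC : [c₀, c₁, c₂, c₃].Nodup)
    (h₀ : s(a, b) ∈ (D c₀).edgeSet) (h₁ : s(b, c) ∈ (D c₁).edgeSet)
    (h₂ : s(c, d) ∈ (D c₂).edgeSet) (h₃ : s(d, a) ∈ (D c₃).edgeSet) :
    HasRainbowCycle D 4 := by
  let W : (⨆ i, D i).Walk a a := .cons (le_iSup D c₀ h₀) <| .cons (le_iSup D c₁ h₁) <|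
    .cons (le_iSup D c₂ h₂) <| .cons (le_iSup D c₃ h₃) .nil
  have hW : W.IsCycle := by
    simp only [List.nodup_cons, List.mem_cons, List.not_mem_nil, or_false] at hV
    simp [W, Walk.cons_isCycle_iff]
    tauto
  exact hW.hasRainbowCycle hC (.cons h₀ <| .cons h₁ <| .cons h₂ <| .cons h₃ .nil)

theorem chord_notMem_edgeSet_of_not_hasRainbowCycle_four {D : ι → SimpleGraph V}
    (hno4 : ¬ HasRainbowCycle D 4) {v : ZMod 5 → V} (hv : Function.Injective v)
    {α : ZMod 5 → ι} (hα : Function.Injective α)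
    (he : ∀ i, s(v i, v (i + 1)) ∈ (D (α i)).edgeSet) {j k : ZMod 5} (hk : k = j ∨ k = j + 1) :
    s(v j, v (j + 2)) ∉ (D (α k)).edgeSet := by
  intro hchord
  have hV : ∀ j : ZMod 5, [j, j + 2, j + 3, j + 4].Nodup := by decide
  have hC : ∀ j : ZMod 5, [j, j + 2, j + 3, j + 4].Nodup ∧ [j + 1, j + 2, j + 3, j + 4].Nodup := by
    decide
  have h₁ := he (j + 2)
  have h₂ := he (j + 3)
  have h₃ := he (j + 4)
  rw [show j + 2 + 1 = j + 3 by grind] at h₁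
  rw [show j + 3 + 1 = j + 4 by grind] at h₂
  rw [show j + 4 + 1 = j by grind] at h₃
  refine hno4 <| hasRainbowCycle_four D ((hV j).map hv) ?_ hchord h₁ h₂ h₃
  rcases hk with rfl | rfl
  exacts [(hC k).1.map hα, (hC j).2.map hα]

end SimpleGraph

open SimpleGraph

/-- Let `C` be a rainbow 5-cycle on vertices `v 0, …, v 4` (indices
mod 5) inside a family `D` of monochromatic graphs with no rainbow 4-cycle, where the
edge `e i = s(v i, v (i+1))` has color `α i`.  If an edge `f` of color `α i` other than
`e i` is incident to `v i` and has both endpoints in `{v 0, …, v 4}`, then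
`f = s(v (i−1), v i)` or `f = s(v i, v (i+3))`; symmetrically, such an edge `g`
incident to `v (i+1)` satisfies `g = s(v (i+1), v (i+2))` or `g = s(v (i+1), v (i+3))`. -/
theorem rainbow_five_cycle_neighbor_edge_positions {V ι : Type*}
    (D : ι → SimpleGraph V)
    (hno4 : ¬ ∃ (u : V) (W : (⨆ i, D i).Walk u u) (σ : Sym2 V → ι),
      W.IsCycle ∧ W.length = 4 ∧
      (∀ e ∈ W.edges, e ∈ (D (σ e)).edgeSet) ∧
      (∀ e ∈ W.edges, ∀ f ∈ W.edges, σ e = σ f → e = f))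
    (v : ZMod 5 → V) (hv : Function.Injective v)
    (α : ZMod 5 → ι) (hα : Function.Injective α)
    (he : ∀ i, s(v i, v (i + 1)) ∈ (D (α i)).edgeSet)
    (i : ZMod 5) :
    (∀ f ∈ (D (α i)).edgeSet, f ≠ s(v i, v (i + 1)) → v i ∈ f →
      (∀ x ∈ f, ∃ j, x = v j) →
      f = s(v (i - 1), v i) ∨ f = s(v i, v (i + 3))) ∧
    (∀ g ∈ (D (α i)).edgeSet, g ≠ s(v i, v (i + 1)) → v (i + 1) ∈ g →
      (∀ x ∈ g, ∃ j, x = v j) →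
      g = s(v (i + 1), v (i + 2)) ∨ g = s(v (i + 1), v (i + 3))) := by
  have chord {j k : ZMod 5} (hk : k = j ∨ k = j + 1) :=
    chord_notMem_edgeSet_of_not_hasRainbowCycle_four hno4 hv hα he hk
  have exists_eq_mk_add {m : ZMod 5} {f : Sym2 V} (hm : v m ∈ f) (hf : ∀ x ∈ f, ∃ j, x = v j) :
      ∃ d, f = s(v m, v (m + d)) := by
    obtain ⟨j, hj⟩ := hf _ (Sym2.other_mem hm)
    exact ⟨j - m, by rw [add_sub_cancel, ← hj, Sym2.other_spec]⟩
  have hd (d : ZMod 5) : d = 0 ∨ d = 1 ∨ d = 2 ∨ d = 3 ∨ d = 4 := by revert d; decide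
  constructor
  · intro f hf hfne hvf hall
    obtain ⟨d, rfl⟩ := exists_eq_mk_add hvf hall
    rcases hd d with rfl | rfl | rfl | rfl | rfl
    · simp at hf
    · exact absurd rfl hfne
    · exact absurd hf (chord (Or.inl rfl))
    · exact .inr rfl
    · exact .inl (by rw [Sym2.eq_swap, show i - 1 = i + 4 by grind])
  · intro g hg hgne hvg hall
    obtain ⟨d, rfl⟩ := exists_eq_mk_add hvg hall
    rcases hd d with rfl | rfl | rfl | rfl | rfl
    · simp at hg
    · exact .inl (by rw [show i + 1 + 1 = i + 2 by grind])
    · exact .inr (by rw [show i + 1 + 2 = i + 3 by grind])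
    · rw [Sym2.eq_swap, show i + 1 + 3 = i + 4 by grind, show i + 1 = i + 4 + 2 by grind] at hg
      exact absurd hg (chord (Or.inr (by grind)))
    · rw [show i + 1 + 4 = i by grind, Sym2.eq_swap] at hgne
      exact absurd rfl hgne
end
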